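/- arXiv:1904.11667 — 3 statements merged into one kernel-verified Lean document; each statement's English description precedes it below -/
import Mathlib

section
/- Let s, r ≥ 0 and d ≥ 1 be integers, let k ≥ 2, let a be a primitive k-th root of unity, and suppose X ∈ E(s,r,d) with data (λ, Q, P, E) is left invariant by the rotation T(w) = a·w (of order k about C = 0), and that 0 is a root of Q of multiplicity ν ≥ 1 (a zero of X). Then k | r, k | d, k | (ν − 1), and there exist λ' ∈ ℂ \ {0}, monic polynomials Q', P' ∈ ℂ[w] with no common roots, deg Q' = (s−1)/k + 1 and deg P' = r/k, and a polynomial E' ∈ ℂ[w] with deg E' = d/k, such that k·z^{k−1}·λ·Q(z)·exp(E(z))·P'(z^k) = λ'·Q'(z^k)·exp(E'(z^k))·P(z) for all z ∈ ℂ; that is, the pushforward of X under z ↦ z^k is the element of E((s−1)/k + 1, r/k, d/k) with data (λ', Q', P', E'). -/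
open Polynomial

noncomputable section

/-- The data `(λ, Q, P, E)` of an element `X ∈ E(s,r,d)`:
`λ ≠ 0`, `Q`, `P` monic of degrees `s`, `r` with no common roots,
and `deg E = d`. -/
def EData (s r d : ℕ) (lam : ℂ) (Q P E : Polynomial ℂ) : Prop :=
  lam ≠ 0 ∧ Q.Monic ∧ P.Monic ∧ Q.natDegree = s ∧ P.natDegree = r ∧
    E.natDegree = d ∧ ∀ z : ℂ, ¬ (Q.IsRoot z ∧ P.IsRoot z)

/-- The affine map `T(w) = a·w + b` leaves the vector field with data `(λ,Q,P,E)`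
invariant: `Q(aw+b)·P(w)·exp(E(aw+b)) = a·Q(w)·P(aw+b)·exp(E(w))` for all `w`. -/
def LeavesInv (Q P E : Polynomial ℂ) (a b : ℂ) : Prop :=
  ∀ w : ℂ,
    Q.eval (a * w + b) * P.eval w * Complex.exp (E.eval (a * w + b)) =
      a * Q.eval w * P.eval (a * w + b) * Complex.exp (E.eval w)

/-!
Invariance under `w ↦ a w` says that `exp (E (a w) - E w)` equals the rational function
`a Q(w) P(a w) / (Q(a w) P(w))`. A nonconstant polynomial takes every value, hence infinitely
many values in `2πiℤ`, which forces the rational function to be `1`, and infinitely many values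
outside `2πiℤ`, which is then impossible; so `E (a w) = E w`. Since `P` is monic, coprime to `Q` and
`P(0) ≠ 0`, the identity `Q(a w) P(w) = a Q(w) P(a w)` splits into `P(a w) = P(w)` and
`Q(a w) = a Q(w)`. Comparing coefficients, only exponents divisible by `k` occur in `E`, `P` and
`Q / w`, so these are polynomials in `w ^ k`, and so is `z ^ (k - 1) Q(z) = z ^ k (Q / z)(z)`.
-/

namespace Polynomial

section Expand

variable {R : Type*} [CommSemiring R] {k : ℕ} {p : R[X]}

theorem expand_contract_of_forall_dvd (hk : k ≠ 0) (h : ∀ n, p.coeff n ≠ 0 → k ∣ n) :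
    expand R k (contract k p) = p := by
  ext n
  rw [coeff_expand (Nat.pos_of_ne_zero hk), coeff_contract hk]
  split_ifs with hn
  · rw [Nat.div_mul_cancel hn]
  · exact (not_not.mp (mt (h n) hn)).symm

theorem dvd_natDegree_of_expand_eq {q : R[X]} (h : expand R k q = p) : k ∣ p.natDegree := by
  rw [← h, natDegree_expand]
  exact dvd_mul_left k _

theorem natDegree_eq_div_of_expand_eq {q : R[X]} (hk : k ≠ 0) (h : expand R k q = p) :
    q.natDegree = p.natDegree / k := by
  rw [← h, natDegree_expand, Nat.mul_div_cancel _ (Nat.pos_of_ne_zero hk)]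

theorem eval_X_mul_of_expand_eq_divX {q : R[X]} (hk : k ≠ 0) (h : expand R k q = p.divX)
    (hp : p.IsRoot 0) (z : R) : (X * q).eval (z ^ k) = z ^ (k - 1) * p.eval z := by
  conv_rhs => rw [← X_mul_divX_add p, coeff_zero_eq_eval_zero, hp.eq_zero]
  rw [eval_mul, eval_X, ← expand_eval, h]
  obtain ⟨j, rfl⟩ := Nat.exists_eq_succ_of_ne_zero hk
  simp only [eval_add, eval_mul, eval_X, eval_C, add_zero, Nat.succ_sub_one, pow_succ]
  ring

theorem Monic.divX (hp : p.Monic) (h : p.natDegree ≠ 0) : p.divX.Monic := by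
  rw [Monic, Polynomial.leadingCoeff, natDegree_divX_eq_natDegree_tsub_one, coeff_divX,
    Nat.sub_add_cancel (Nat.pos_of_ne_zero h)]
  exact hp

end Expand

section Rotation

variable {R : Type*} [CommRing R] [IsDomain R] {a : R} {k : ℕ} {p : R[X]}

theorem dvd_of_comp_C_mul_X_eq (ha : IsPrimitiveRoot a k) (h : p.comp (C a * X) = p) {n : ℕ}
    (hn : p.coeff n ≠ 0) : k ∣ n := by
  have hcoeff := congrArg (coeff · n) h
  simp only [comp_C_mul_X_coeff] at hcoeff
  exact (ha.pow_eq_one_iff_dvd n).mp (mul_left_cancel₀ hn (hcoeff.trans (mul_one _).symm))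

theorem expand_contract_of_comp_C_mul_X_eq (ha : IsPrimitiveRoot a k) (hk : k ≠ 0)
    (h : p.comp (C a * X) = p) : expand R k (contract k p) = p :=
  expand_contract_of_forall_dvd hk fun _ hn => dvd_of_comp_C_mul_X_eq ha h hn

theorem divX_comp_C_mul_X_eq (ha : a ≠ 0) (h : p.comp (C a * X) = C a * p) :
    p.divX.comp (C a * X) = p.divX := by
  ext n
  have hcoeff := congrArg (coeff · (n + 1)) h
  simp only [comp_C_mul_X_coeff, coeff_C_mul, pow_succ] at hcoeff
  rw [comp_C_mul_X_coeff, coeff_divX]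
  exact mul_right_cancel₀ ha (by rw [mul_assoc, hcoeff, mul_comm])

end Rotation

section Field

variable {K : Type*} [Field K] {a : K} {P Q : K[X]}

theorem comp_C_mul_X_eq_of_mul_eq (hP : P.Monic) (hcop : IsCoprime P Q) (hP0 : P.eval 0 ≠ 0)
    (ha : a ≠ 0) (h : Q.comp (C a * X) * P = C a * Q * P.comp (C a * X)) :
    P.comp (C a * X) = P ∧ Q.comp (C a * X) = C a * Q := by
  have hdvd : P ∣ P.comp (C a * X) := by
    have : P ∣ Q * (C a * P.comp (C a * X)) := ⟨Q.comp (C a * X), by rw [mul_comm P, h]; ring⟩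
    exact (isUnit_C.mpr ha.isUnit).dvd_mul_left.mp (hcop.dvd_of_dvd_mul_left this)
  have hdeg : (P.comp (C a * X)).natDegree ≤ P.natDegree := by
    rw [natDegree_comp, natDegree_C_mul_X a ha, mul_one]
  have hlead := eq_leadingCoeff_mul_of_monic_of_dvd_of_natDegree_le hP hdvd hdeg
  have hlead_one : (P.comp (C a * X)).leadingCoeff = 1 := by
    have h0 := congrArg (eval 0) hlead
    simp only [eval_comp, eval_mul, eval_C, eval_X, mul_zero] at h0
    exact (mul_left_eq_self₀.mp h0.symm).resolve_right hP0
  have hPa : P.comp (C a * X) = P := by rw [hlead, hlead_one, C_1, one_mul]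
  refine ⟨hPa, mul_right_cancel₀ hP.ne_zero ?_⟩
  rw [h, hPa]

theorem not_isRoot_X_mul_and_isRoot_of_expand_eq [IsAlgClosed K] {k : ℕ} {R P' : K[X]}
    (hk : k ≠ 0) (hroots : ∀ z, ¬(Q.IsRoot z ∧ P.IsRoot z)) (hQ0 : Q.IsRoot 0)
    (hR : expand K k R = Q.divX) (hP' : expand K k P' = P) (w : K) :
    ¬((X * R).IsRoot w ∧ P'.IsRoot w) := by
  rintro ⟨hQw, hPw⟩
  obtain ⟨z, rfl⟩ := IsAlgClosed.exists_pow_nat_eq w (Nat.pos_of_ne_zero hk)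
  rw [IsRoot, eval_X_mul_of_expand_eq_divX hk hR hQ0, mul_eq_zero] at hQw
  rw [IsRoot, ← expand_eval, hP'] at hPw
  refine hroots z ⟨hQw.elim (fun hz => ?_) id, hPw⟩
  rwa [eq_zero_of_pow_eq_zero hz]

end Field

end Polynomial

namespace Complex

theorem infinite_setOf_exp_eq_one : {c : ℂ | exp c = 1}.Infinite := by
  refine Set.infinite_of_injective_forall_mem (f := fun n : ℤ => n * (2 * Real.pi * I))
    (fun m n hmn => ?_) fun n => exp_int_mul_two_pi_mul_I n
  have h2pi : (2 * Real.pi * I : ℂ) ≠ 0 := by simp [Real.pi_ne_zero]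
  exact_mod_cast mul_right_cancel₀ h2pi hmn

theorem infinite_setOf_exp_ne_one : {c : ℂ | exp c ≠ 1}.Infinite := by
  refine ((Set.Ioi_infinite (0 : ℝ)).image ofReal_injective.injOn).mono ?_
  rintro _ ⟨x, hx, rfl⟩ hexp
  rw [← ofReal_exp, ofReal_eq_one, Real.exp_eq_one_iff] at hexp
  exact (Set.mem_Ioi.mp hx).ne' hexp

end Complex

theorem Polynomial.natDegree_eq_zero_of_eval_mul_exp_eq {A B G : ℂ[X]} (hA : A ≠ 0)
    (h : ∀ w, A.eval w * Complex.exp (G.eval w) = B.eval w) : G.natDegree = 0 := by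
  by_contra hG
  have hpre : ∀ {S : Set ℂ}, S.Infinite → (G.eval ⁻¹' S).Infinite := fun hS =>
    Set.Infinite.of_image G.eval (by rwa [Set.image_preimage_eq _ (IsAlgClosed.eval_surjective hG)])
  have hAB : A = B := by
    refine sub_eq_zero.mp (eq_zero_of_infinite_isRoot _ ?_)
    refine (hpre Complex.infinite_setOf_exp_eq_one).mono fun w hw => ?_
    simp only [Set.mem_preimage, Set.mem_ofPred_eq] at hw
    simp [← h w, hw]
  obtain ⟨w, hw, hAw⟩ :=
    (hpre Complex.infinite_setOf_exp_ne_one).exists_notMem_finite (finite_setOfPred_isRoot hA)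
  exact hw (mul_left_cancel₀ hAw ((h w).trans (by rw [hAB, mul_one])))

theorem LeavesInv.exp_comp_eq {Q P E : ℂ[X]} {a : ℂ} (hQ : Q ≠ 0) (hP : P ≠ 0) (ha : a ≠ 0)
    (h : LeavesInv Q P E a 0) :
    E.comp (C a * X) = E ∧ Q.comp (C a * X) * P = C a * Q * P.comp (C a * X) := by
  set G := E.comp (C a * X) - E
  have hrat : ∀ w, (Q.comp (C a * X) * P).eval w * Complex.exp (G.eval w) =
      (C a * Q * P.comp (C a * X)).eval w := by
    intro w
    apply mul_right_cancel₀ (Complex.exp_ne_zero (E.eval w))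
    simp only [G, eval_mul, eval_comp, eval_sub, eval_C, eval_X]
    rw [mul_assoc _ (Complex.exp _), ← Complex.exp_add, sub_add_cancel]
    simpa using h w
  have hQa : Q.comp (C a * X) ≠ 0 :=
    (comp_C_mul_X_eq_zero_iff (mem_nonZeroDivisors_of_ne_zero ha)).not.mpr hQ
  have hG : G = 0 := by
    have hGdeg := natDegree_eq_zero_of_eval_mul_exp_eq (mul_ne_zero hQa hP) hrat
    rw [eq_C_of_natDegree_eq_zero hGdeg]
    simp [G]
  refine ⟨sub_eq_zero.mp hG, Polynomial.funext fun w => ?_⟩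
  simpa [hG] using hrat w

theorem LeavesInv.comp_C_mul_X_eq {Q P E : ℂ[X]} {a : ℂ} (hQ : Q ≠ 0) (hP : P.Monic)
    (hroots : ∀ z, ¬(Q.IsRoot z ∧ P.IsRoot z)) (hQ0 : Q.IsRoot 0) (ha : a ≠ 0)
    (h : LeavesInv Q P E a 0) :
    E.comp (C a * X) = E ∧ P.comp (C a * X) = P ∧ Q.comp (C a * X) = C a * Q := by
  have hcop : IsCoprime P Q := (isCoprime_iff_aeval_ne_zero_of_isAlgClosed ℂ ℂ P Q).mpr
    fun z => by simpa [or_comm] using not_and_or.mp (hroots z)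
  obtain ⟨hE, hmul⟩ := h.exp_comp_eq hQ hP.ne_zero ha
  exact ⟨hE, comp_C_mul_X_eq_of_mul_eq hP hcop (fun hP0 => hroots 0 ⟨hQ0, hP0⟩) ha hmul⟩

theorem stmt17_general (s r d : ℕ)
    (lam : ℂ) (Q P E : Polynomial ℂ) (hX : EData s r d lam Q P E)
    (k : ℕ) (hk : 2 ≤ k) (a : ℂ) (hprim : IsPrimitiveRoot a k)
    (hinv : LeavesInv Q P E a 0)
    (hν : 1 ≤ Q.rootMultiplicity 0) :
    k ∣ r ∧ k ∣ d ∧ k ∣ (Q.rootMultiplicity 0 - 1) ∧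
    ∃ (lam' : ℂ) (Q' P' E' : Polynomial ℂ),
      lam' ≠ 0 ∧ Q'.Monic ∧ P'.Monic ∧
      (∀ z : ℂ, ¬ (Q'.IsRoot z ∧ P'.IsRoot z)) ∧
      Q'.natDegree = (s - 1) / k + 1 ∧ P'.natDegree = r / k ∧
      E'.natDegree = d / k ∧
      ∀ z : ℂ,
        (k : ℂ) * z ^ (k - 1) * lam * Q.eval z * Complex.exp (E.eval z) *
            P'.eval (z ^ k) =
          lam' * Q'.eval (z ^ k) * Complex.exp (E'.eval (z ^ k)) * P.eval z := by
  obtain ⟨hlam, hQm, hPm, rfl, rfl, rfl, hroots⟩ := hX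
  have hk0 : k ≠ 0 := by omega
  have ha : a ≠ 0 := hprim.ne_zero hk0
  have hQ0 : Q.IsRoot 0 := (rootMultiplicity_pos hQm.ne_zero).mp hν
  obtain ⟨hE, hP, hQ⟩ := hinv.comp_C_mul_X_eq hQm.ne_zero hPm hroots hQ0 ha
  have hD := divX_comp_C_mul_X_eq ha hQ
  have hE' := expand_contract_of_comp_C_mul_X_eq hprim hk0 hE
  have hP' := expand_contract_of_comp_C_mul_X_eq hprim hk0 hP
  have hR := expand_contract_of_comp_C_mul_X_eq hprim hk0 hD
  have hQdeg : Q.natDegree ≠ 0 := fun h0 => by simp [hQm.natDegree_eq_zero.mp h0] at hQ0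
  have hRm : (contract k Q.divX).Monic :=
    (monic_expand_iff (Nat.pos_of_ne_zero hk0)).mp (hR.symm ▸ hQm.divX hQdeg)
  have hcoeffν : Q.divX.coeff (Q.rootMultiplicity 0 - 1) ≠ 0 := by
    rw [coeff_divX, Nat.sub_add_cancel hν, rootMultiplicity_eq_natTrailingDegree']
    exact trailingCoeff_nonzero_iff_nonzero.mpr hQm.ne_zero
  refine ⟨dvd_natDegree_of_expand_eq hP', dvd_natDegree_of_expand_eq hE',
    dvd_of_comp_C_mul_X_eq hprim hD hcoeffν, k * lam, X * contract k Q.divX, contract k P,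
    contract k E, mul_ne_zero (Nat.cast_ne_zero.mpr hk0) hlam, monic_X.mul hRm,
    (monic_expand_iff (Nat.pos_of_ne_zero hk0)).mp (hP'.symm ▸ hPm),
    not_isRoot_X_mul_and_isRoot_of_expand_eq hk0 hroots hQ0 hR hP', ?_,
    natDegree_eq_div_of_expand_eq hk0 hP', natDegree_eq_div_of_expand_eq hk0 hE', fun z => ?_⟩
  · rw [natDegree_X_mul hRm.ne_zero, natDegree_eq_div_of_expand_eq hk0 hR,
      natDegree_divX_eq_natDegree_tsub_one]
  · rw [eval_X_mul_of_expand_eq_divX hk0 hR hQ0, ← expand_eval, hP', ← expand_eval, hE']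
    ring

/-- if `X ∈ E(s,r,d)` is invariant under the rotation
`T(w) = a·w` of order `k ≥ 2` about `0`, and `0` is a zero of `X` of
multiplicity `ν ≥ 1`, then `k ∣ r`, `k ∣ d`, `k ∣ (ν−1)`, and the pushforward
of `X` under `z ↦ z^k` is an element of `E((s−1)/k + 1, r/k, d/k)`. -/
theorem stmt17 (s r d : ℕ) (hd : 1 ≤ d)
    (lam : ℂ) (Q P E : Polynomial ℂ) (hX : EData s r d lam Q P E)
    (k : ℕ) (hk : 2 ≤ k) (a : ℂ) (hprim : IsPrimitiveRoot a k)
    (hinv : LeavesInv Q P E a 0)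
    (hν : 1 ≤ Q.rootMultiplicity 0) :
    k ∣ r ∧ k ∣ d ∧ k ∣ (Q.rootMultiplicity 0 - 1) ∧
    ∃ (lam' : ℂ) (Q' P' E' : Polynomial ℂ),
      lam' ≠ 0 ∧ Q'.Monic ∧ P'.Monic ∧
      (∀ z : ℂ, ¬ (Q'.IsRoot z ∧ P'.IsRoot z)) ∧
      Q'.natDegree = (s - 1) / k + 1 ∧ P'.natDegree = r / k ∧
      E'.natDegree = d / k ∧
      ∀ z : ℂ,
        (k : ℂ) * z ^ (k - 1) * lam * Q.eval z * Complex.exp (E.eval z) *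
            P'.eval (z ^ k) =
          lam' * Q'.eval (z ^ k) * Complex.exp (E'.eval (z ^ k)) * P.eval z :=
  stmt17_general s r d lam Q P E hX k hk a hprim hinv hν
end
end

section
/- Let r ≥ 1 and let X ∈ E(0,r,0) have data (λ, P). A nontrivial affine map T(w) = a·w + b leaves X invariant if and only if a^{r+1} = 1 and P(a·w+b) = a^r·P(w) as polynomials. In that case a ≠ 1, a is a primitive k-th root of unity for some k ≥ 2 with k | (r + 1), and the fixed point C = b/(1 − a) of T is a root of P of multiplicity ν ≥ 1 with k | (ν + 1). -/
/-!
Comparing leading coefficients in `P(a w + b) = a⁻¹ P(w)` gives `a ^ r = a⁻¹`. If `a = 1` then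
`P` is `b`-periodic with `b ≠ 0`, hence constant, which `r ≥ 1` excludes. Otherwise `T` fixes
`c = b / (1 - a)`; expanding `P` at `c`, its lowest Taylor term `(w - c) ^ ν` is scaled by `a ^ ν`
under `T`, so `a ^ ν = a ^ r = a⁻¹`. Thus `a ^ (r + 1) = a ^ (ν + 1) = 1`, and `k` is the order
of `a`.
-/

open Polynomial

namespace Polynomial

variable {R : Type*} [CommRing R] [IsDomain R]

theorem pow_natTrailingDegree_eq_of_comp_C_mul_X_eq {p : R[X]} (hp : p ≠ 0) {a d : R}
    (h : p.comp (C a * X) = C d * p) : a ^ p.natTrailingDegree = d := by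
  have hcoeff := congrArg (coeff · p.natTrailingDegree) h
  simp only [comp_C_mul_X_coeff, coeff_C_mul] at hcoeff
  exact mul_right_cancel₀ (trailingCoeff_nonzero_iff_nonzero.mpr hp)
    (by rw [mul_comm]; exact hcoeff)

theorem pow_rootMultiplicity_eq_of_comp_eq {p : R[X]} (hp : p ≠ 0) {a b c d : R}
    (hc : a * c + b = c) (h : p.comp (C a * X + C b) = C d * p) :
    a ^ p.rootMultiplicity c = d := by
  rw [rootMultiplicity_eq_natTrailingDegree]
  refine pow_natTrailingDegree_eq_of_comp_C_mul_X_eq (comp_X_add_C_ne_zero_iff.mpr hp) ?_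
  have hshift : (X + C c).comp (C a * X) = (C a * X + C b).comp (X + C c) := by
    have hC : C a * C c + C b = C c := by rw [← C_mul, ← C_add, hc]
    simp only [add_comp, X_comp, C_comp, mul_comp]
    linear_combination -hC
  rw [comp_assoc, hshift, ← comp_assoc, h, mul_comp, C_comp]

theorem leadingCoeff_comp_C_mul_X_add_C {p : R[X]} {a : R} (ha : a ≠ 0) (b : R) :
    (p.comp (C a * X + C b)).leadingCoeff = p.leadingCoeff * a ^ p.natDegree := by
  rw [leadingCoeff_comp (by rw [natDegree_linear ha]; norm_num), leadingCoeff_linear ha]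

theorem Monic.eq_C_mul_comp_iff {p : R[X]} (hp : p.Monic) {a : R} (ha : a ≠ 0) (b : R) :
    p = C a * p.comp (C a * X + C b) ↔
      a ^ (p.natDegree + 1) = 1 ∧ p.comp (C a * X + C b) = C (a ^ p.natDegree) * p := by
  constructor
  · intro h
    have hlc : a ^ (p.natDegree + 1) = 1 := by
      have := congrArg Polynomial.leadingCoeff h
      rwa [hp.leadingCoeff, leadingCoeff_mul, leadingCoeff_C, leadingCoeff_comp_C_mul_X_add_C ha,
        hp.leadingCoeff, one_mul, ← pow_succ', eq_comm] at this
    refine ⟨hlc, ?_⟩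
    calc p.comp (C a * X + C b)
        = C (a ^ (p.natDegree + 1)) * p.comp (C a * X + C b) := by rw [hlc, map_one, one_mul]
      _ = C (a ^ p.natDegree) * (C a * p.comp (C a * X + C b)) := by rw [pow_succ, map_mul]; ring
      _ = C (a ^ p.natDegree) * p := by rw [← h]
  · rintro ⟨hlc, h⟩
    rw [h, ← mul_assoc, ← C_mul, ← pow_succ', hlc, map_one, one_mul]

theorem eq_C_mul_comp_iff_forall_eval [Infinite R] {p : R[X]} {a b : R} :
    p = C a * p.comp (C a * X + C b) ↔ ∀ w, p.eval w = a * p.eval (a * w + b) := by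
  refine ⟨fun h w => ?_, fun h => Polynomial.funext fun w => ?_⟩
  · conv_lhs => rw [h]
    simp
  · simp [h w]

theorem natDegree_eq_zero_of_forall_eval_add_eq [CharZero R] {p : R[X]} {b : R} (hb : b ≠ 0)
    (h : ∀ w, p.eval (w + b) = p.eval w) : p.natDegree = 0 := by
  have hmul : ∀ n : ℕ, p.eval (n * b) = p.eval 0 := by
    intro n
    induction n with
    | zero => simp
    | succ n ih => rw [Nat.cast_succ, add_one_mul, h, ih]
  have hinf : {x | p.eval x = (C (p.eval 0)).eval x}.Infinite :=
    Set.infinite_of_injective_forall_mem (f := fun n : ℕ => (n : R) * b)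
      (fun m n hmn => Nat.cast_injective (mul_right_cancel₀ hb hmn)) (by simp [hmul])
  rw [eq_of_infinite_eval_eq p _ hinf, natDegree_C]

end Polynomial

theorem exists_isPrimitiveRoot_dvd_of_pow_eq_one {M : Type*} [CommMonoid M] {a : M} (ha : a ≠ 1)
    {m n : ℕ} (hm : 0 < m) (ham : a ^ m = 1) (han : a ^ n = 1) :
    ∃ k, 2 ≤ k ∧ IsPrimitiveRoot a k ∧ k ∣ m ∧ k ∣ n := by
  have hpos : 0 < orderOf a := orderOf_pos_iff.mpr (isOfFinOrder_iff_pow_eq_one.mpr ⟨m, hm, ham⟩)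
  have hne : orderOf a ≠ 1 := mt orderOf_eq_one_iff.mp ha
  exact ⟨orderOf a, by omega, .orderOf a, orderOf_dvd_of_pow_eq_one ham,
    orderOf_dvd_of_pow_eq_one han⟩

theorem stmt18_general (r : ℕ) (hr : 1 ≤ r)
    (P : Polynomial ℂ) (hP : P.Monic) (hPdeg : P.natDegree = r)
    (a b : ℂ) (ha : a ≠ 0) (hnt : (a, b) ≠ (1, 0)) :
    ((∀ w : ℂ, P.eval w = a * P.eval (a * w + b)) ↔
      (a ^ (r + 1) = 1 ∧ P.comp (C a * X + C b) = C (a ^ r) * P)) ∧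
    ((∀ w : ℂ, P.eval w = a * P.eval (a * w + b)) →
      a ≠ 1 ∧ ∃ k : ℕ, 2 ≤ k ∧ IsPrimitiveRoot a k ∧ k ∣ (r + 1) ∧
        1 ≤ P.rootMultiplicity (b / (1 - a)) ∧
        k ∣ (P.rootMultiplicity (b / (1 - a)) + 1)) := by
  have hiff : (∀ w : ℂ, P.eval w = a * P.eval (a * w + b)) ↔
      (a ^ (r + 1) = 1 ∧ P.comp (C a * X + C b) = C (a ^ r) * P) := by
    rw [← eq_C_mul_comp_iff_forall_eval, hP.eq_C_mul_comp_iff ha, hPdeg]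
  refine ⟨hiff, fun hinv => ?_⟩
  obtain ⟨hroot, hcomp⟩ := hiff.mp hinv
  have ha1 : a ≠ 1 := by
    rintro rfl
    have hb : b ≠ 0 := by simpa using hnt
    have hperiodic (w : ℂ) : P.eval (w + b) = P.eval w := by simpa [add_comm] using (hinv w).symm
    have := natDegree_eq_zero_of_forall_eval_add_eq hb hperiodic
    omega
  have hfix : a * (b / (1 - a)) + b = b / (1 - a) := by
    field_simp [sub_ne_zero.mpr (Ne.symm ha1)]
    ring
  have hmult : a ^ (P.rootMultiplicity (b / (1 - a)) + 1) = 1 := by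
    rw [pow_succ, pow_rootMultiplicity_eq_of_comp_eq hP.ne_zero hfix hcomp, ← pow_succ, hroot]
  obtain ⟨k, hk, hprim, hkr, hkν⟩ :=
    exists_isPrimitiveRoot_dvd_of_pow_eq_one ha1 r.succ_pos hroot hmult
  have hν := Nat.le_of_dvd (Nat.succ_pos _) hkν
  exact ⟨ha1, k, hk, hprim, hkr, by omega, hkν⟩

/-- for the rational family `E(0,r,0)` with data `(λ, P)`
(`X = (λ/P(z)) ∂/∂z`, `P` monic of degree `r ≥ 1`), a nontrivial affine map
`T(w) = a·w + b` leaves `X` invariant (i.e. `P(w) = a·P(aw+b)` for all `w`)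
iff `a^(r+1) = 1` and `P(aw+b) = a^r·P(w)` as polynomials; in that case
`a ≠ 1`, `a` is a primitive `k`-th root of unity for some `k ≥ 2` with
`k ∣ (r+1)`, and `C = b/(1−a)` is a root of `P` of multiplicity `ν ≥ 1`
with `k ∣ (ν+1)`. -/
theorem stmt18 (r : ℕ) (hr : 1 ≤ r)
    (lam : ℂ) (hlam : lam ≠ 0)
    (P : Polynomial ℂ) (hP : P.Monic) (hPdeg : P.natDegree = r)
    (a b : ℂ) (ha : a ≠ 0) (hnt : (a, b) ≠ (1, 0)) :
    ((∀ w : ℂ, P.eval w = a * P.eval (a * w + b)) ↔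
      (a ^ (r + 1) = 1 ∧ P.comp (C a * X + C b) = C (a ^ r) * P)) ∧
    ((∀ w : ℂ, P.eval w = a * P.eval (a * w + b)) →
      a ≠ 1 ∧ ∃ k : ℕ, 2 ≤ k ∧ IsPrimitiveRoot a k ∧ k ∣ (r + 1) ∧
        1 ≤ P.rootMultiplicity (b / (1 - a)) ∧
        k ∣ (P.rootMultiplicity (b / (1 - a)) + 1)) :=
  stmt18_general r hr P hP hPdeg a b ha hnt
end

section
/- Let s ≥ 2 and let X ∈ E(s,0,0) have data (λ, Q). A nontrivial affine map T(w) = a·w + b leaves X invariant if and only if a^{s−1} = 1, a ≠ 1, and Q(a·w+b) = a^s·Q(w) as polynomials. In that case a is a primitive k-th root of unity for some k ≥ 2 with k | (s − 1), and the fixed point C = b/(1 − a) of T is a root of Q of multiplicity ν ≥ 1 with k | (ν − 1). -/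
/-!
Move the fixed point `C = b/(1-a)` of `T` to the origin: `P(w) = Q(w + C)` satisfies
`P(a w) = a P(w)`, so every nonzero coefficient `p_m` of `P` forces `a^m = a`. The leading
coefficient gives `a^s = a`, and the lowest one, which sits in degree `ν = mult_C Q`, gives
`a^ν = a`; hence the order `k` of `a` divides both `s - 1` and `ν - 1`. The case `a = 1` is
excluded because a nonconstant polynomial has no nonzero period: it would take the same value
at all the points `n b`.
-/

open Polynomial

lemma pow_sub_one_eq_one_iff {G₀ : Type*} [GroupWithZero G₀] {a : G₀} (ha : a ≠ 0) {n : ℕ}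
    (hn : n ≠ 0) : a ^ (n - 1) = 1 ↔ a ^ n = a := by
  rw [← mul_left_inj' ha, pow_sub_one_mul hn, one_mul]

lemma two_le_orderOf {M : Type*} [Monoid M] {a : M} {n : ℕ} (hn : n ≠ 0) (han : a ^ n = 1)
    (ha : a ≠ 1) : 2 ≤ orderOf a := by
  have h0 : orderOf a ≠ 0 := (orderOf_pos_iff.mpr (isOfFinOrder_iff_pow_eq_one.mpr
    ⟨n, Nat.pos_of_ne_zero hn, han⟩)).ne'
  have h1 : orderOf a ≠ 1 := fun h => ha (orderOf_eq_one_iff.mp h)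
  omega

namespace Polynomial

variable {R : Type*} [CommRing R]

lemma comp_C_mul_X_add_C_comp_X_add_C (p : R[X]) {a b z : R} (hz : a * z + b = z) :
    (p.comp (C a * X + C b)).comp (X + C z) = (p.comp (X + C z)).comp (C a * X) := by
  have hC : C z = C a * C z + C b := by rw [← C_mul, ← C_add, hz]
  rw [comp_assoc, comp_assoc]
  congr 1
  simp only [add_comp, mul_comp, C_comp, X_comp]
  linear_combination -hC

variable [IsDomain R]

lemma eq_zero_of_comp_X_add_C_eq_self [CharZero R] {p : R[X]} (hp : 0 < p.natDegree) {b : R}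
    (h : p.comp (X + C b) = p) : b = 0 := by
  by_contra hb
  have hperiodic : ∀ n : ℕ, p.eval (n * b) = p.eval 0 := by
    intro n
    induction n with
    | zero => simp
    | succ n ih =>
      have hstep := congrArg (eval (n * b)) h
      simp only [eval_comp, eval_add, eval_X, eval_C] at hstep
      rw [Nat.cast_succ, add_one_mul, hstep, ih]
  have hroots : Set.range (fun n : ℕ => (n : R) * b) ⊆ {x | (p - C (p.eval 0)).IsRoot x} := by
    rintro _ ⟨n, rfl⟩
    simp [hperiodic n]
  have hinj : Function.Injective (fun n : ℕ => (n : R) * b) := fun m n hmn =>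
    Nat.cast_injective (mul_right_cancel₀ hb hmn)
  have hconst : p - C (p.eval 0) = 0 :=
    eq_zero_of_infinite_isRoot _ ((Set.infinite_range_of_injective hinj).mono hroots)
  rw [sub_eq_zero] at hconst
  rw [hconst, natDegree_C] at hp
  exact hp.false

lemma ne_one_of_comp_C_mul_X_add_C_eq_C_mul [CharZero R] {p : R[X]} (hp : 0 < p.natDegree)
    {a b : R} (h : p.comp (C a * X + C b) = C a * p) (hab : (a, b) ≠ (1, 0)) : a ≠ 1 := by
  rintro rfl
  exact hab (Prod.ext rfl (eq_zero_of_comp_X_add_C_eq_self hp (by simpa using h)))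

lemma pow_eq_of_comp_C_mul_X_eq_C_mul {p : R[X]} {a c : R} (h : p.comp (C a * X) = C c * p)
    {n : ℕ} (hn : p.coeff n ≠ 0) : a ^ n = c := by
  have hcoeff := congrArg (coeff · n) h
  simp only [comp_C_mul_X_coeff, coeff_C_mul] at hcoeff
  exact mul_left_cancel₀ hn (hcoeff.trans (mul_comm c _))

lemma pow_rootMultiplicity_eq_and_pow_natDegree_eq {p : R[X]} (hp : p ≠ 0) {a b c z : R}
    (h : p.comp (C a * X + C b) = C c * p) (hz : a * z + b = z) :
    a ^ p.rootMultiplicity z = c ∧ a ^ p.natDegree = c := by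
  set q := p.comp (X + C z)
  have hq : q ≠ 0 := comp_X_add_C_ne_zero_iff.mpr hp
  have hcomp : q.comp (C a * X) = C c * q := by
    rw [← comp_C_mul_X_add_C_comp_X_add_C p hz, h, mul_comp, C_comp]
  constructor
  · rw [rootMultiplicity_eq_natTrailingDegree]
    exact pow_eq_of_comp_C_mul_X_eq_C_mul hcomp (trailingCoeff_nonzero_iff_nonzero.mpr hq)
  · have hdeg : q.natDegree = p.natDegree := by rw [natDegree_comp, natDegree_X_add_C, mul_one]
    rw [← hdeg]
    exact pow_eq_of_comp_C_mul_X_eq_C_mul hcomp (leadingCoeff_ne_zero.mpr hq)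

end Polynomial

theorem stmt19_general (s : ℕ) (hs : 2 ≤ s)
    (Q : Polynomial ℂ) (hQ : Q.Monic) (hQdeg : Q.natDegree = s)
    (a b : ℂ) (ha : a ≠ 0) (hnt : (a, b) ≠ (1, 0)) :
    ((∀ w : ℂ, Q.eval (a * w + b) = a * Q.eval w) ↔
      (a ^ (s - 1) = 1 ∧ a ≠ 1 ∧
        Q.comp (C a * X + C b) = C (a ^ s) * Q)) ∧
    ((∀ w : ℂ, Q.eval (a * w + b) = a * Q.eval w) →
      ∃ k : ℕ, 2 ≤ k ∧ IsPrimitiveRoot a k ∧ k ∣ (s - 1) ∧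
        1 ≤ Q.rootMultiplicity (b / (1 - a)) ∧
        k ∣ (Q.rootMultiplicity (b / (1 - a)) - 1)) := by
  have hinv : (∀ w : ℂ, Q.eval (a * w + b) = a * Q.eval w) ↔
      Q.comp (C a * X + C b) = C a * Q :=
    ⟨fun H => funext fun w => by simp [H], fun h w => by simpa using congrArg (eval w) h⟩
  have key (h : Q.comp (C a * X + C b) = C a * Q) :
      a ≠ 1 ∧ a ^ s = a ∧ a ^ Q.rootMultiplicity (b / (1 - a)) = a := by
    have ha1 : a ≠ 1 := ne_one_of_comp_C_mul_X_add_C_eq_C_mul (by omega) h hnt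
    have hfix : a * (b / (1 - a)) + b = b / (1 - a) := by
      field_simp [sub_ne_zero.mpr ha1.symm]
      ring
    obtain ⟨hmult, hdeg⟩ := pow_rootMultiplicity_eq_and_pow_natDegree_eq hQ.ne_zero h hfix
    exact ⟨ha1, hQdeg ▸ hdeg, hmult⟩
  have hpow := pow_sub_one_eq_one_iff ha (n := s) (by omega)
  refine ⟨⟨fun H => ?_, fun ⟨hs1, _, hcomp⟩ => ?_⟩, fun H => ?_⟩
  · obtain ⟨ha1, has, -⟩ := key (hinv.mp H)
    exact ⟨hpow.mpr has, ha1, by rw [has]; exact hinv.mp H⟩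
  · rw [hpow.mp hs1] at hcomp
    exact hinv.mpr hcomp
  · obtain ⟨ha1, has, hmult⟩ := key (hinv.mp H)
    have hν : Q.rootMultiplicity (b / (1 - a)) ≠ 0 := by
      rintro hν
      exact ha1 (by rw [← hmult, hν, pow_zero])
    exact ⟨orderOf a, two_le_orderOf (by omega) (hpow.mpr has) ha1, IsPrimitiveRoot.orderOf a,
      orderOf_dvd_of_pow_eq_one (hpow.mpr has), Nat.one_le_iff_ne_zero.mpr hν,
      orderOf_dvd_of_pow_eq_one ((pow_sub_one_eq_one_iff ha hν).mpr hmult)⟩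

/-- for the polynomial family `E(s,0,0)` with data `(λ, Q)`
(`X = λ·Q(z) ∂/∂z`, `Q` monic of degree `s ≥ 2`), a nontrivial affine map
`T(w) = a·w + b` leaves `X` invariant (i.e. `Q(aw+b) = a·Q(w)` for all `w`)
iff `a^(s−1) = 1`, `a ≠ 1`, and `Q(aw+b) = a^s·Q(w)` as polynomials; in that
case `a` is a primitive `k`-th root of unity for some `k ≥ 2` with
`k ∣ (s−1)`, and `C = b/(1−a)` is a root of `Q` of multiplicity `ν ≥ 1`
with `k ∣ (ν−1)`. -/
theorem stmt19 (s : ℕ) (hs : 2 ≤ s)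
    (lam : ℂ) (hlam : lam ≠ 0)
    (Q : Polynomial ℂ) (hQ : Q.Monic) (hQdeg : Q.natDegree = s)
    (a b : ℂ) (ha : a ≠ 0) (hnt : (a, b) ≠ (1, 0)) :
    ((∀ w : ℂ, Q.eval (a * w + b) = a * Q.eval w) ↔
      (a ^ (s - 1) = 1 ∧ a ≠ 1 ∧
        Q.comp (C a * X + C b) = C (a ^ s) * Q)) ∧
    ((∀ w : ℂ, Q.eval (a * w + b) = a * Q.eval w) →
      ∃ k : ℕ, 2 ≤ k ∧ IsPrimitiveRoot a k ∧ k ∣ (s - 1) ∧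
        1 ≤ Q.rootMultiplicity (b / (1 - a)) ∧
        k ∣ (Q.rootMultiplicity (b / (1 - a)) - 1)) :=
  stmt19_general s hs Q hQ hQdeg a b ha hnt
end
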